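/- arXiv:1306.2171 — 4 statements merged into one kernel-verified Lean document; each statement's English description precedes it below -/
import Mathlib

section
/- Let G be a finite simple graph, let k ≥ 1 be a natural number, and let v be a vertex of G with deg_G(v) > k. Then the map S ↦ S \ {v} is a bijection from the set of vertex covers of G of size at most k onto the set of vertex covers of G − v of size at most k − 1 (where G − v is the induced subgraph of G on V \ {v}), with inverse T ↦ T ∪ {v}. -/
/-! A cover that misses `v` must contain all `deg_G(v) > k` neighbours of `v`, so every cover of
size at most `k` contains `v`; removing `v` from it, or adding `v` to a cover of `G − v`, then
changes the size by exactly one. -/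

/-- `S` is a vertex cover of `G`: every edge of `G` has at least one endpoint in `S`. -/
def IsVertexCover {V : Type*} (G : SimpleGraph V) (S : Finset V) : Prop :=
  ∀ ⦃u w : V⦄, G.Adj u w → u ∈ S ∨ w ∈ S

/-- `T` is a vertex cover of `G − v` (the induced subgraph of `G` on `V \ {v}`):
`T` is a set of vertices of `G − v` (i.e. avoids `v`) covering every edge of `G`
not incident to `v`. -/
def IsVertexCoverMinus {V : Type*} (G : SimpleGraph V) (v : V) (T : Finset V) : Prop :=
  v ∉ T ∧ ∀ ⦃u w : V⦄, G.Adj u w → u ≠ v → w ≠ v → u ∈ T ∨ w ∈ T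

namespace IsVertexCover

variable {V : Type*} {G : SimpleGraph V} {S : Finset V}

theorem neighborFinset_subset_of_notMem {v : V} [Fintype (G.neighborSet v)]
    (hS : IsVertexCover G S) (hv : v ∉ S) : G.neighborFinset v ⊆ S := fun u hu =>
  (hS ((G.mem_neighborFinset v u).1 hu).symm).resolve_right hv

theorem mem_of_card_lt_degree {v : V} [Fintype (G.neighborSet v)]
    (hS : IsVertexCover G S) (hcard : S.card < G.degree v) : v ∈ S := by
  by_contra hv
  have hle := Finset.card_le_card (hS.neighborFinset_subset_of_notMem hv)
  rw [SimpleGraph.card_neighborFinset_eq_degree] at hle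
  omega

theorem isVertexCoverMinus_erase [DecidableEq V] (hS : IsVertexCover G S) (v : V) :
    IsVertexCoverMinus G v (S.erase v) := by
  refine ⟨S.notMem_erase v, fun u w huw hu hw => ?_⟩
  rcases hS huw with h | h
  · exact .inl (Finset.mem_erase.2 ⟨hu, h⟩)
  · exact .inr (Finset.mem_erase.2 ⟨hw, h⟩)

end IsVertexCover

theorem IsVertexCoverMinus.isVertexCover_insert {V : Type*} [DecidableEq V] {G : SimpleGraph V}
    {v : V} {T : Finset V} (hT : IsVertexCoverMinus G v T) : IsVertexCover G (insert v T) := by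
  intro u w huw
  by_cases hu : u = v
  · exact .inl (hu ▸ T.mem_insert_self v)
  by_cases hw : w = v
  · exact .inr (hw ▸ T.mem_insert_self v)
  exact (hT.2 huw hu hw).imp Finset.mem_insert_of_mem Finset.mem_insert_of_mem

/-- If `deg_G(v) > k ≥ 1`, then `S ↦ S \ {v}` is a bijection from the vertex covers of `G` of
size at most `k` onto the vertex covers of `G − v` of size at most `k − 1`, with inverse
`T ↦ T ∪ {v}`. -/
theorem vertexCover_erase_bijection {V : Type*} [Fintype V] [DecidableEq V]
    (G : SimpleGraph V) [DecidableRel G.Adj] (k : ℕ) (hk : 1 ≤ k) (v : V)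
    (hdeg : k < G.degree v) :
    (∀ S : Finset V, IsVertexCover G S → S.card ≤ k →
      IsVertexCoverMinus G v (S.erase v) ∧ (S.erase v).card ≤ k - 1 ∧
        insert v (S.erase v) = S) ∧
    (∀ T : Finset V, IsVertexCoverMinus G v T → T.card ≤ k - 1 →
      IsVertexCover G (insert v T) ∧ (insert v T).card ≤ k ∧
        (insert v T).erase v = T) := by
  constructor
  · intro S hS hcard
    have hv : v ∈ S := hS.mem_of_card_lt_degree (by omega)
    have hcard_erase := Finset.card_erase_of_mem hv
    exact ⟨hS.isVertexCoverMinus_erase v, by omega, Finset.insert_erase hv⟩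
  · intro T hT hcard
    have hcard_insert := Finset.card_insert_of_notMem hT.1
    exact ⟨hT.isVertexCover_insert, by omega, Finset.erase_insert hT.1⟩
end

section
/- Let G be a finite simple graph with vertex set V and let k be a natural number. Let D ⊆ V be a set such that every vertex cover of G of size at most k contains D. Let I = {v ∈ V \ D : every neighbor of v in G lies in D}, and let H be the induced subgraph of G on V \ (D ∪ I). For each vertex cover W of H, define the family F_W = {W ∪ D ∪ V' : V' ⊆ I and |W ∪ D ∪ V'| ≤ k}. Then: (a) for distinct vertex covers W₁ ≠ W₂ of H, the families F_{W₁} and F_{W₂} are disjoint; and (b) the union of the families F_W over all vertex covers W of H equals the set of all vertex covers of G of size at most k. -/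
/-- `S` is a vertex cover of `G` (as a set of vertices). -/
def IsVertexCoverSet {V : Type*} (G : SimpleGraph V) (S : Set V) : Prop :=
  ∀ ⦃u w : V⦄, G.Adj u w → u ∈ S ∨ w ∈ S

/-- `W` is a vertex cover of the induced subgraph `G[A]`: `W ⊆ A` and `W` covers every edge of
`G` with both endpoints in `A`. -/
def IsVertexCoverInduced {V : Type*} (G : SimpleGraph V) (A : Set V) (W : Set V) : Prop :=
  W ⊆ A ∧ ∀ ⦃u w : V⦄, G.Adj u w → u ∈ A → w ∈ A → u ∈ W ∨ w ∈ W

/-!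
A vertex cover `S` of size at most `k` contains `D`, so it splits as `(S \ (D ∪ I)) ∪ D ∪ (S ∩ I)`,
where the first part covers `H`. Conversely, if `W` covers `H` then `W ∪ D` already covers `G`,
since an edge avoiding `D` cannot touch `I` and hence lies in `H`. The families are disjoint
because `W` is recovered from any member `X` of `F_W` as `X \ (D ∪ I)`.
-/

namespace Set

variable {α : Type*}

theorem union_union_inter_compl_union {W D I V' : Set α} (hW : W ⊆ (D ∪ I)ᶜ) (hV' : V' ⊆ I) :
    (W ∪ D ∪ V') ∩ (D ∪ I)ᶜ = W := by
  ext v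
  simp only [mem_inter_iff, mem_union, mem_compl_iff, not_or]
  constructor
  · rintro ⟨(hv | hv) | hv, hvD, hvI⟩
    exacts [hv, absurd hv hvD, absurd (hV' hv) hvI]
  · exact fun hv => ⟨Or.inl (Or.inl hv), by simpa using hW hv⟩

theorem eq_inter_compl_union_union_inter {S D I : Set α} (hD : D ⊆ S) :
    S = S ∩ (D ∪ I)ᶜ ∪ D ∪ S ∩ I := by
  ext v
  by_cases hvD : v ∈ D
  · simp [hvD, hD hvD]
  · by_cases hvI : v ∈ I <;> simp [hvD, hvI]

end Set

section VertexCover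

variable {V : Type*} {G : SimpleGraph V}

theorem IsVertexCoverSet.mono {S T : Set V} (hS : IsVertexCoverSet G S) (hST : S ⊆ T) :
    IsVertexCoverSet G T :=
  fun _ _ huw => (hS huw).imp (@hST _) (@hST _)

theorem IsVertexCoverSet.isVertexCoverInduced_inter {S : Set V} (hS : IsVertexCoverSet G S)
    (A : Set V) : IsVertexCoverInduced G A (S ∩ A) :=
  ⟨Set.inter_subset_right, fun _ _ huw huA hwA => (hS huw).imp (⟨·, huA⟩) (⟨·, hwA⟩)⟩

theorem IsVertexCoverInduced.isVertexCoverSet_union {D I W : Set V}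
    (hI : ∀ v ∈ I, ∀ w, G.Adj v w → w ∈ D) (hW : IsVertexCoverInduced G (D ∪ I)ᶜ W) :
    IsVertexCoverSet G (W ∪ D) := by
  intro u w huw
  by_cases hu : u ∈ D
  · exact Or.inl (Or.inr hu)
  by_cases hw : w ∈ D
  · exact Or.inr (Or.inr hw)
  have huA : u ∉ D ∪ I := fun h => h.elim hu fun hu' => hw (hI u hu' w huw)
  have hwA : w ∉ D ∪ I := fun h => h.elim hw fun hw' => hu (hI w hw' u huw.symm)
  exact (hW.2 huw huA hwA).imp Or.inl Or.inl

end VertexCover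

theorem buss_families_partition_general {V : Type*} (G : SimpleGraph V) (k : ℕ)
    (D : Set V) (hD : ∀ S : Set V, IsVertexCoverSet G S → S.ncard ≤ k → D ⊆ S) :
    let I : Set V := {v | v ∉ D ∧ ∀ w : V, G.Adj v w → w ∈ D}
    let A : Set V := (D ∪ I)ᶜ
    let F : Set V → Set (Set V) :=
      fun W => {X | ∃ V' ⊆ I, X = W ∪ D ∪ V' ∧ X.ncard ≤ k}
    (∀ W₁ W₂ : Set V, IsVertexCoverInduced G A W₁ → IsVertexCoverInduced G A W₂ →
      W₁ ≠ W₂ → F W₁ ∩ F W₂ = ∅) ∧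
    (⋃ W ∈ {W : Set V | IsVertexCoverInduced G A W}, F W) =
      {S : Set V | IsVertexCoverSet G S ∧ S.ncard ≤ k} := by
  intro I A F
  have hI : ∀ v ∈ I, ∀ w, G.Adj v w → w ∈ D := fun _ hv => hv.2
  refine ⟨fun W₁ W₂ h₁ h₂ hne => ?_, ?_⟩
  · refine Set.eq_empty_of_forall_notMem fun X ⟨⟨V₁, hV₁, hX₁, _⟩, ⟨V₂, hV₂, hX₂, _⟩⟩ => hne ?_
    rw [← Set.union_union_inter_compl_union h₁.1 hV₁, ← hX₁, hX₂,
      Set.union_union_inter_compl_union h₂.1 hV₂]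
  · ext S
    simp only [Set.mem_iUnion, Set.mem_ofPred_eq, exists_prop]
    constructor
    · rintro ⟨W, hW, V', -, rfl, hk⟩
      exact ⟨(hW.isVertexCoverSet_union hI).mono Set.subset_union_left, hk⟩
    · rintro ⟨hS, hk⟩
      exact ⟨S ∩ A, hS.isVertexCoverInduced_inter A, S ∩ I, Set.inter_subset_right,
        Set.eq_inter_compl_union_union_inter (hD S hS hk), hk⟩

/-- Buss-kernelization correctness: if every vertex cover of `G` of size `≤ k` contains `D`,
`I` is the set of vertices outside `D` all of whose neighbours lie in `D`, and `H` is the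
induced subgraph on the complement of `D ∪ I`, then the families
`F_W = {W ∪ D ∪ V' : V' ⊆ I, |W ∪ D ∪ V'| ≤ k}` (for `W` a vertex cover of `H`) are pairwise
disjoint and their union is exactly the set of vertex covers of `G` of size `≤ k`. -/
theorem buss_families_partition {V : Type*} [Fintype V] (G : SimpleGraph V) (k : ℕ)
    (D : Set V) (hD : ∀ S : Set V, IsVertexCoverSet G S → S.ncard ≤ k → D ⊆ S) :
    let I : Set V := {v | v ∉ D ∧ ∀ w : V, G.Adj v w → w ∈ D}
    let A : Set V := (D ∪ I)ᶜ
    let F : Set V → Set (Set V) :=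
      fun W => {X | ∃ V' ⊆ I, X = W ∪ D ∪ V' ∧ X.ncard ≤ k}
    (∀ W₁ W₂ : Set V, IsVertexCoverInduced G A W₁ → IsVertexCoverInduced G A W₂ →
      W₁ ≠ W₂ → F W₁ ∩ F W₂ = ∅) ∧
    (⋃ W ∈ {W : Set V | IsVertexCoverInduced G A W}, F W) =
      {S : Set V | IsVertexCoverSet G S ∧ S.ncard ≤ k} :=
  buss_families_partition_general G k D hD
end

section
/- Fix a finite simple graph G on a finite vertex type V. Consider the following reduction relation on pairs (s, k), where s is a finite set of vertices and k a natural number: (Rule 1) if v ∈ s and the degree of v in the induced subgraph G[s] is greater than k, then (s, k) reduces to (s \ {v}, k − 1); (Rule 2) if v ∈ s and v is isolated in G[s], then (s, k) reduces to (s \ {v}, k). Then this reduction relation has unique normal forms: for every pair (s, k), any two irreducible pairs reachable from (s, k) by finite sequences of reduction steps are equal. -/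
/-!
Deleting one vertex changes the degree of any other vertex in the induced subgraph by at most
one, and by nothing if the deleted vertex was isolated. Hence a reduction step available at
`(s, k)` remains available after any other step, and the two orders of performing them meet at
the same pair. This one-step diamond makes the reduction confluent, so normal forms are unique.
-/

open Finset

namespace Relation

variable {α : Type*} {r : α → α → Prop} {a b c : α}

theorem ReflTransGen.eq_of_forall_not_rel (h : ReflTransGen r a b) (ha : ∀ c, ¬ r a c) :
    a = b :=
  h.cases_head.resolve_right fun ⟨c, hac, _⟩ => ha c hac

theorem eq_of_church_rosser_of_forall_not_rel
    (h : ∀ a b c, r a b → r a c → ∃ d, ReflGen r b d ∧ ReflTransGen r c d)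
    (hb : ReflTransGen r a b) (hc : ReflTransGen r a c)
    (hb' : ∀ d, ¬ r b d) (hc' : ∀ d, ¬ r c d) : b = c := by
  obtain ⟨d, hbd, hcd⟩ := church_rosser h hb hc
  rw [hbd.eq_of_forall_not_rel hb', hcd.eq_of_forall_not_rel hc']

end Relation

namespace SimpleGraph

variable {V : Type*} (G : SimpleGraph V) [DecidableRel G.Adj]

def inducedDegree (v : V) (s : Finset V) : ℕ := #(s.filter (G.Adj v))

/-- Deleting `v` from `(s, k)` is a legal reduction step and leaves the parameter `m`. -/
def BussDrop (s : Finset V) (k : ℕ) (v : V) (m : ℕ) : Prop :=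
  k < G.inducedDegree v s ∧ m = k - 1 ∨ G.inducedDegree v s = 0 ∧ m = k

variable {G} {s : Finset V} {k k₁ k₂ : ℕ} {v w : V}

theorem not_adj_of_inducedDegree_eq_zero (h : G.inducedDegree v s = 0) (hw : w ∈ s) :
    ¬ G.Adj v w :=
  filter_eq_empty_iff.1 (card_eq_zero.1 h) hw

theorem BussDrop.unique (h₁ : G.BussDrop s k v k₁) (h₂ : G.BussDrop s k v k₂) : k₁ = k₂ := by
  unfold BussDrop at h₁ h₂
  omega

variable [DecidableEq V]

variable (G) in
def BussRed (p q : Finset V × ℕ) : Prop :=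
  (∃ v ∈ p.1, p.2 < G.inducedDegree v p.1 ∧ q = (p.1.erase v, p.2 - 1)) ∨
    (∃ v ∈ p.1, G.inducedDegree v p.1 = 0 ∧ q = (p.1.erase v, p.2))

theorem inducedDegree_erase_le : G.inducedDegree w (s.erase v) ≤ G.inducedDegree w s := by
  rw [inducedDegree, inducedDegree, filter_erase]
  exact card_erase_le

theorem inducedDegree_le_inducedDegree_erase_add_one :
    G.inducedDegree w s ≤ G.inducedDegree w (s.erase v) + 1 := by
  rw [inducedDegree, inducedDegree, filter_erase]
  have := pred_card_le_card_erase (s := s.filter (G.Adj w)) (a := v)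
  omega

theorem inducedDegree_erase_of_not_adj (h : ¬ G.Adj w v) :
    G.inducedDegree w (s.erase v) = G.inducedDegree w s := by
  rw [inducedDegree, inducedDegree, filter_erase, erase_eq_of_notMem (by simp [h])]

theorem bussRed_iff {q : Finset V × ℕ} :
    G.BussRed (s, k) q ↔ ∃ v ∈ s, ∃ m, G.BussDrop s k v m ∧ q = (s.erase v, m) := by
  simp only [BussRed, BussDrop]
  constructor
  · rintro (⟨v, hv, hdeg, rfl⟩ | ⟨v, hv, hdeg, rfl⟩)
    exacts [⟨v, hv, _, .inl ⟨hdeg, rfl⟩, rfl⟩, ⟨v, hv, _, .inr ⟨hdeg, rfl⟩, rfl⟩]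
  · rintro ⟨v, hv, m, ⟨hdeg, rfl⟩ | ⟨hdeg, rfl⟩, rfl⟩
    exacts [.inl ⟨v, hv, hdeg, rfl⟩, .inr ⟨v, hv, hdeg, rfl⟩]

/-- The parameter `k₁ + k₂ - k` equals `k - 2` (truncated) when both steps are Rule 1
steps, and `min k₁ k₂` otherwise. -/
theorem BussDrop.erase (hw : w ∈ s) (hv : G.BussDrop s k v k₁) (hw' : G.BussDrop s k w k₂) :
    G.BussDrop (s.erase v) k₁ w (k₁ + k₂ - k) := by
  unfold BussDrop at *
  have hle : G.inducedDegree w (s.erase v) ≤ G.inducedDegree w s := inducedDegree_erase_le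
  have hge : G.inducedDegree w s ≤ G.inducedDegree w (s.erase v) + 1 :=
    inducedDegree_le_inducedDegree_erase_add_one
  rcases hv with ⟨hv, rfl⟩ | ⟨hv, rfl⟩
  · omega
  · have hnadj : ¬ G.Adj w v := fun h => not_adj_of_inducedDegree_eq_zero hv hw h.symm
    rw [inducedDegree_erase_of_not_adj hnadj]
    omega

theorem bussRed_diamond {a b c : Finset V × ℕ} (hb : G.BussRed a b) (hc : G.BussRed a c) :
    ∃ d, Relation.ReflGen G.BussRed b d ∧ Relation.ReflGen G.BussRed c d := by
  obtain ⟨s, k⟩ := a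
  obtain ⟨v, hv, k₁, hv', rfl⟩ := bussRed_iff.1 hb
  obtain ⟨w, hw, k₂, hw', rfl⟩ := bussRed_iff.1 hc
  rcases eq_or_ne v w with rfl | hvw
  · rw [hv'.unique hw']
    exact ⟨_, .refl, .refl⟩
  refine ⟨((s.erase v).erase w, k₁ + k₂ - k), .single ?_, .single ?_⟩
  · exact bussRed_iff.2 ⟨w, mem_erase.2 ⟨hvw.symm, hw⟩, _, hv'.erase hw hw', rfl⟩
  · rw [erase_right_comm, add_comm]
    exact bussRed_iff.2 ⟨v, mem_erase.2 ⟨hvw, hv⟩, _, hw'.erase hv hv', rfl⟩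

theorem bussRed_normalForm_unique {p q₁ q₂ : Finset V × ℕ}
    (h₁ : Relation.ReflTransGen G.BussRed p q₁) (h₂ : Relation.ReflTransGen G.BussRed p q₂)
    (hq₁ : ∀ r, ¬ G.BussRed q₁ r) (hq₂ : ∀ r, ¬ G.BussRed q₂ r) : q₁ = q₂ :=
  Relation.eq_of_church_rosser_of_forall_not_rel (r := G.BussRed)
    (fun _ _ _ hb hc =>
      let ⟨d, hbd, hcd⟩ := bussRed_diamond hb hc
      ⟨d, hbd, hcd.to_reflTransGen⟩)
    h₁ h₂ hq₁ hq₂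

end SimpleGraph

theorem buss_reduction_unique_normal_form_general {V : Type*} [DecidableEq V]
    (G : SimpleGraph V) [DecidableRel G.Adj] :
    let deg : V → Finset V → ℕ := fun v s => (s.filter (fun w => G.Adj v w)).card
    let Red : Finset V × ℕ → Finset V × ℕ → Prop := fun p q =>
      (∃ v ∈ p.1, p.2 < deg v p.1 ∧ q = (p.1.erase v, p.2 - 1)) ∨
      (∃ v ∈ p.1, deg v p.1 = 0 ∧ q = (p.1.erase v, p.2))
    ∀ p q₁ q₂ : Finset V × ℕ,
      Relation.ReflTransGen Red p q₁ → Relation.ReflTransGen Red p q₂ →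
      (∀ r, ¬ Red q₁ r) → (∀ r, ¬ Red q₂ r) → q₁ = q₂ :=
  fun _ _ _ => G.bussRed_normalForm_unique

/-- Buss reduction rules have unique normal forms: on pairs `(s, k)`, Rule 1 removes a vertex
`v ∈ s` whose degree in the induced subgraph `G[s]` exceeds `k` and decreases `k` by one;
Rule 2 removes a vertex `v ∈ s` isolated in `G[s]`.  Any two irreducible pairs reachable from
a given pair by finite sequences of reduction steps coincide. -/
theorem buss_reduction_unique_normal_form {V : Type*} [Fintype V] [DecidableEq V]
    (G : SimpleGraph V) [DecidableRel G.Adj] :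
    let deg : V → Finset V → ℕ := fun v s => (s.filter (fun w => G.Adj v w)).card
    let Red : Finset V × ℕ → Finset V × ℕ → Prop := fun p q =>
      (∃ v ∈ p.1, p.2 < deg v p.1 ∧ q = (p.1.erase v, p.2 - 1)) ∨
      (∃ v ∈ p.1, deg v p.1 = 0 ∧ q = (p.1.erase v, p.2))
    ∀ p q₁ q₂ : Finset V × ℕ,
      Relation.ReflTransGen Red p q₁ → Relation.ReflTransGen Red p q₂ →
      (∀ r, ¬ Red q₁ r) → (∀ r, ¬ Red q₂ r) → q₁ = q₂ :=
  buss_reduction_unique_normal_form_general G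
end

section
/- Let R be a 1-valid Boolean relation of arity m with tuples m₁, m₂ ∈ R such that m₁ ∨ m₂ ∉ R, and let R' be a 1-valid Boolean relation of arity m' with tuples m₁', m₂' ∈ R' such that m₁' ⊕ m₂' ⊕ 1 ∉ R'. Let M and M' be the 4-ary relations defined by M(a,b,c,d) iff the m-tuple with i-th coordinate a, b, c, d according as (m₁(i), m₂(i)) equals (0,0), (0,1), (1,0), (1,1) belongs to R, and analogously M'(a,b,c,d) from R', m₁', m₂'. Define the ternary relation Q ⊆ {0,1}³ by Q(x,y,z) := M(x,y,z,1) ∧ M'(x,y,z,1). Then Q contains the tuples (0,0,1), (0,1,0), and (1,1,1), and contains neither (0,1,1) nor (1,0,0). -/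
/-- The `m`-tuple whose `i`-th coordinate is `a`, `b`, `c`, `d` according as
`(m₁ i, m₂ i)` equals `(0,0)`, `(0,1)`, `(1,0)`, `(1,1)`. -/
def selTuple {m : ℕ} (m₁ m₂ : Fin m → Bool) (a b c d : Bool) : Fin m → Bool :=
  fun i =>
    match m₁ i, m₂ i with
    | false, false => a
    | false, true  => b
    | true,  false => c
    | true,  true  => d

section selTuple

variable {m : ℕ} (m₁ m₂ : Fin m → Bool)

theorem selTuple_eq_left : selTuple m₁ m₂ false false true true = m₁ := by
  funext i; unfold selTuple; cases m₁ i <;> cases m₂ i <;> rfl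

theorem selTuple_eq_right : selTuple m₁ m₂ false true false true = m₂ := by
  funext i; unfold selTuple; cases m₁ i <;> cases m₂ i <;> rfl

theorem selTuple_true : selTuple m₁ m₂ true true true true = fun _ => true := by
  funext i; unfold selTuple; cases m₁ i <;> cases m₂ i <;> rfl

theorem selTuple_eq_or : selTuple m₁ m₂ false true true true = fun i => m₁ i || m₂ i := by
  funext i; unfold selTuple; cases m₁ i <;> cases m₂ i <;> rfl

theorem selTuple_eq_xnor :
    selTuple m₁ m₂ true false false true = fun i => ((m₁ i).xor (m₂ i)).xor true := by
  funext i; unfold selTuple; cases m₁ i <;> cases m₂ i <;> rfl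

end selTuple

/-- Combining the 4-ary relations `M` (from a 1-valid `R` with `m₁, m₂ ∈ R`, `m₁ ∨ m₂ ∉ R`)
and `M'` (from a 1-valid `R'` with `m₁', m₂' ∈ R'`, `m₁' ⊕ m₂' ⊕ 1 ∉ R'`), the ternary
relation `Q(x,y,z) := M(x,y,z,1) ∧ M'(x,y,z,1)` contains `(0,0,1)`, `(0,1,0)` and `(1,1,1)`,
and contains neither `(0,1,1)` nor `(1,0,0)`. -/
theorem ternary_relation_Q {m m' : ℕ}
    (R : Set (Fin m → Bool)) (m₁ m₂ : Fin m → Bool)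
    (hR1 : (fun _ => true) ∈ R) (h₁ : m₁ ∈ R) (h₂ : m₂ ∈ R)
    (hor : (fun i => m₁ i || m₂ i) ∉ R)
    (R' : Set (Fin m' → Bool)) (m₁' m₂' : Fin m' → Bool)
    (hR'1 : (fun _ => true) ∈ R') (h₁' : m₁' ∈ R') (h₂' : m₂' ∈ R')
    (hxnor : (fun i => ((m₁' i).xor (m₂' i)).xor true) ∉ R') :
    let M : Bool → Bool → Bool → Bool → Prop :=
      fun a b c d => selTuple m₁ m₂ a b c d ∈ R
    let M' : Bool → Bool → Bool → Bool → Prop :=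
      fun a b c d => selTuple m₁' m₂' a b c d ∈ R'
    let Q : Bool → Bool → Bool → Prop := fun x y z => M x y z true ∧ M' x y z true
    Q false false true ∧ Q false true false ∧ Q true true true ∧
      ¬ Q false true true ∧ ¬ Q true false false := by
  intro M M' Q
  simp only [Q, M, M', selTuple_eq_left, selTuple_eq_right, selTuple_true, selTuple_eq_or,
    selTuple_eq_xnor]
  exact ⟨⟨h₁, h₁'⟩, ⟨h₂, h₂'⟩, ⟨hR1, hR'1⟩, fun h => hor h.1, fun h => hxnor h.2⟩
end
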